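/- arXiv:2201.10825 — 2 statements merged into one kernel-verified Lean document; each statement's English description precedes it below -/
import Mathlib

section
/- For every n ≥ 1 there is a deterministic two-player game G_n with n+2 states and an RDD strategy M_n of Player 1 with n memory states such that every DRD strategy outcome-equivalent to M_n has at least 2^n − 1 memory states. -/
open scoped Classical

/-- A two-player stochastic game with state set `S` (partitioned by `P1`),
action set `A`, and probabilistic transition function `delta`. -/
structure Game (S A : Type) [Fintype S] [Fintype A] where
  P1 : S → Bool
  delta : S → A → S → ℝ
  delta_nonneg : ∀ s a s', 0 ≤ delta s a s'
  delta_sum : ∀ s a, ∑ s', delta s a s' = 1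

variable {S A : Type} [Fintype S] [Fintype A]

/-- A (behavioural) strategy assigns to every word `w ∈ (S×A)*` and current
state a probability distribution over actions. -/
def IsStrategy (σ : List (S × A) → S → A → ℝ) : Prop :=
  (∀ w s a, 0 ≤ σ w s a) ∧ ∀ w s, ∑ a, σ w s a = 1

/-- Probability of the cylinder of the history starting in `s0` and following
`steps`, under Player 1 strategy `σ1` and Player 2 strategy `σ2`. -/
def histProb (G : Game S A) (σ1 σ2 : List (S × A) → S → A → ℝ) (s0 : S)
    (steps : List (A × S)) : ℝ :=
  (steps.foldl
    (fun (acc : ℝ × S × List (S × A)) (p : A × S) =>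
      (acc.1 * (if G.P1 acc.2.1 then σ1 acc.2.2 acc.2.1 p.1 else σ2 acc.2.2 acc.2.1 p.1)
          * G.delta acc.2.1 p.1 p.2,
        p.2, acc.2.2 ++ [(acc.2.1, p.1)]))
    ((1 : ℝ), s0, ([] : List (S × A)))).1

/-- Two Player-1 strategies are outcome-equivalent if they induce the same
probability of every cylinder, against every Player-2 strategy and from every
initial state. -/
def OutcomeEquiv (G : Game S A) (σ τ : List (S × A) → S → A → ℝ) : Prop :=
  ∀ σ2, IsStrategy σ2 → ∀ s0 steps, histProb G σ σ2 s0 steps = histProb G τ σ2 s0 steps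

/-- The steps form a genuine history: all transitions have positive probability. -/
def validHist (G : Game S A) : S → List (A × S) → Prop
  | _, [] => True
  | s, (a, s') :: rest => 0 < G.delta s a s' ∧ validHist G s' rest

/-- Consistency of a history with a Player-1 strategy: every action chosen at a
Player-1 state has positive probability. -/
def consistentFrom (G : Game S A) (σ : List (S × A) → S → A → ℝ) :
    List (S × A) → S → List (A × S) → Prop
  | _, _, [] => True
  | w, s, (a, s') :: rest =>
      (G.P1 s = true → 0 < σ w s a) ∧ consistentFrom G σ (w ++ [(s, a)]) s' rest

/-- The word `w ∈ (S×A)*` and last state of the history `(s0, steps)`. -/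
def histWord (s0 : S) (steps : List (A × S)) : List (S × A) × S :=
  steps.foldl (fun acc p => (acc.1 ++ [(acc.2, p.1)], p.2)) (([] : List (S × A)), s0)
/-- A stochastic Mealy machine with memory `Fin n`. -/
structure Mealy (n : ℕ) (S A : Type) where
  init : Fin n → ℝ
  next : Fin n → S → A → ℝ
  up : Fin n → S → A → Fin n → ℝ

def ProperMealy {n : ℕ} (N : Mealy n S A) : Prop :=
  (∀ m, 0 ≤ N.init m) ∧ (∑ m, N.init m) = 1 ∧
  (∀ m s a, 0 ≤ N.next m s a) ∧ (∀ m s, ∑ a, N.next m s a = 1) ∧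
  (∀ m s a m', 0 ≤ N.up m s a m') ∧ ∀ m s a, ∑ m', N.up m s a m' = 1

def IsDirac {α : Type} (μ : α → ℝ) : Prop := ∃ x, ∀ y, μ y = if y = x then 1 else 0

/-- Deterministic initialisation. -/
def DetInit {n : ℕ} (N : Mealy n S A) : Prop := IsDirac N.init
/-- Deterministic outputs. -/
def DetNext {n : ℕ} (N : Mealy n S A) : Prop := ∀ m s, IsDirac (N.next m s)
/-- Deterministic updates. -/
def DetUp {n : ℕ} (N : Mealy n S A) : Prop := ∀ m s a, IsDirac (N.up m s a)

/-- One-step (Bayesian) update of the distribution over memory states upon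
reading the pair `(s, a)`. -/
noncomputable def stepDist (G : Game S A) {n : ℕ} (N : Mealy n S A)
    (μ : Fin n → ℝ) (s : S) (a : A) : Fin n → ℝ :=
  if G.P1 s = true ∧ (∑ m', μ m' * N.next m' s a) ≠ 0 then
    fun m => (∑ m', μ m' * N.up m' s a m * N.next m' s a) / (∑ m', μ m' * N.next m' s a)
  else fun m => ∑ m', μ m' * N.up m' s a m

/-- Distribution over memory states after the machine processes `w`. -/
noncomputable def memDist (G : Game S A) {n : ℕ} (N : Mealy n S A)
    (w : List (S × A)) : Fin n → ℝ :=
  w.foldl (fun μ p => stepDist G N μ p.1 p.2) N.init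

/-- The strategy induced by a stochastic Mealy machine. -/
noncomputable def mealyStrat (G : Game S A) {n : ℕ} (N : Mealy n S A)
    (w : List (S × A)) (s : S) (a : A) : ℝ :=
  ∑ m, memDist G N w m * N.next m s a

/-!
In `G_n`, Player 2 can take the play from `t` through any sequence of states `s_i` before
sending it to the sink `s*`. In memory state `m` the machine `M_n` plays `b` at every `s_i` with
`i ≠ m`, so once the states `s_i`, `i ∉ F`, have been visited, its posterior on memory is uniform
on `F`, and at `s*` it plays `a_j` with probability `1 / |F|` for `j ∈ F` and `0` otherwise.
Against the uniform Player-2 strategy this history has positive probability, so an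
outcome-equivalent strategy must play the same distribution after it. A DRD machine is in a
single memory state after any history, and its move at `s*` depends on that state alone; as the
distributions `unifOn F` are pairwise distinct for the `2^n - 1` nonempty `F`, it needs at least
`2^n - 1` memory states.
-/

theorem histWord_append_singleton {S A : Type} (s0 : S) (steps : List (A × S)) (a : A)
    (s' : S) :
    histWord s0 (steps ++ [(a, s')]) =
      ((histWord s0 steps).1 ++ [((histWord s0 steps).2, a)], s') := by
  simp [histWord, List.foldl_append]

theorem histProb_append_singleton (G : Game S A) (σ1 σ2 : List (S × A) → S → A → ℝ)
    (s0 : S) (steps : List (A × S)) (a : A) (s' : S) {w : List (S × A)} {s : S}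
    (hw : histWord s0 steps = (w, s)) :
    histProb G σ1 σ2 s0 (steps ++ [(a, s')]) =
      histProb G σ1 σ2 s0 steps * (if G.P1 s then σ1 w s a else σ2 w s a) * G.delta s a s' := by
  -- the word-and-state part of the fold defining `histProb` is the fold defining `histWord`
  have hstate := List.foldl_hom (l := steps) (init := ((1 : ℝ), s0, ([] : List (S × A))))
    (fun acc : ℝ × S × List (S × A) => (acc.2.2, acc.2.1))
    (g₁ := fun acc p =>
      (acc.1 * (if G.P1 acc.2.1 then σ1 acc.2.2 acc.2.1 p.1 else σ2 acc.2.2 acc.2.1 p.1)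
          * G.delta acc.2.1 p.1 p.2, p.2, acc.2.2 ++ [(acc.2.1, p.1)]))
    (g₂ := fun acc p => (acc.1 ++ [(acc.2, p.1)], p.2)) (fun _ _ => rfl)
  change histWord s0 steps = _ at hstate
  rw [hw, Prod.mk.injEq] at hstate
  simp only [histProb, List.foldl_concat, ← hstate.1, ← hstate.2]

theorem OutcomeEquiv.apply_eq_of_histProb_ne_zero {G : Game S A}
    {σ τ σ2 : List (S × A) → S → A → ℝ} (hστ : OutcomeEquiv G σ τ) (hσ2 : IsStrategy σ2)
    {s0 : S} {steps : List (A × S)} {w : List (S × A)} {s : S} (hw : histWord s0 steps = (w, s))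
    (hs : G.P1 s = true) (hpos : histProb G σ σ2 s0 steps ≠ 0) {a : A} {s' : S}
    (hδ : G.delta s a s' ≠ 0) :
    σ w s a = τ w s a := by
  have h := hστ σ2 hσ2 s0 (steps ++ [(a, s')])
  rw [histProb_append_singleton G σ σ2 s0 steps a s' hw,
    histProb_append_singleton G τ σ2 s0 steps a s' hw, ← hστ σ2 hσ2 s0 steps, hs] at h
  simpa [hpos, hδ] using h

-- The decidability instance is left to unification: `IsDirac` is stated with the classical one,
-- while `if y = x` on `Fin k` elaborates with `instDecidableEqFin`.
theorem sum_mul_eq_of_dirac {α : Type} [Fintype α] {μ : α → ℝ} {x : α}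
    {_ : ∀ y, Decidable (y = x)} (hμ : ∀ y, μ y = if y = x then 1 else 0) (f : α → ℝ) :
    ∑ y, μ y * f y = f x := by
  rw [Finset.sum_eq_single x (fun y _ hy => by rw [hμ, if_neg hy, zero_mul]) (by simp), hμ,
    if_pos rfl, one_mul]

theorem memDist_append_singleton (G : Game S A) {k : ℕ} (N : Mealy k S A) (w : List (S × A))
    (s : S) (a : A) :
    memDist G N (w ++ [(s, a)]) = stepDist G N (memDist G N w) s a := by
  simp [memDist]

theorem stepDist_of_dirac (G : Game S A) {k : ℕ} (N : Mealy k S A) {μ : Fin k → ℝ} {x : Fin k}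
    {_ : ∀ y, Decidable (y = x)} (hμ : ∀ y, μ y = if y = x then 1 else 0) (s : S) (a : A) :
    stepDist G N μ s a = N.up x s a := by
  funext m
  unfold stepDist
  split_ifs with h
  · rw [sum_mul_eq_of_dirac hμ] at h ⊢
    simp only [mul_assoc]
    rw [sum_mul_eq_of_dirac hμ (fun y => N.up y s a m * N.next y s a),
      mul_div_cancel_right₀ _ h.2]
  · exact sum_mul_eq_of_dirac hμ _

theorem isDirac_memDist (G : Game S A) {k : ℕ} {B : Mealy k S A} (hI : DetInit B)
    (hU : DetUp B) (w : List (S × A)) :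
    IsDirac (memDist G B w) := by
  induction w using List.reverseRecOn with
  | nil => exact hI
  | append_singleton w p ih =>
    obtain ⟨x, hx⟩ := ih
    rw [memDist_append_singleton, stepDist_of_dirac G B hx]
    exact hU x p.1 p.2

theorem exists_mealyStrat_eq_next (G : Game S A) {k : ℕ} {B : Mealy k S A} (hI : DetInit B)
    (hU : DetUp B) (w : List (S × A)) :
    ∃ m, ∀ s a, mealyStrat G B w s a = B.next m s a := by
  obtain ⟨m, hm⟩ := isDirac_memDist G hI hU w
  exact ⟨m, fun s a => sum_mul_eq_of_dirac hm _⟩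

noncomputable def unifOn {α : Type} [DecidableEq α] (T : Finset α) (x : α) : ℝ :=
  if x ∈ T then (T.card : ℝ)⁻¹ else 0

theorem unifOn_ne_zero_iff {α : Type} [DecidableEq α] {T : Finset α} {x : α} :
    unifOn T x ≠ 0 ↔ x ∈ T := by
  unfold unifOn
  split_ifs with hx
  · simpa [hx] using Finset.card_ne_zero_of_mem hx
  · simpa

theorem unifOn_injective {α : Type} [DecidableEq α] : Function.Injective (unifOn (α := α)) :=
  fun T T' h => Finset.ext fun x => by rw [← unifOn_ne_zero_iff, h, unifOn_ne_zero_iff]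

theorem two_pow_card_sub_one_le_card {ι α : Type} [Fintype ι] [Fintype α] [DecidableEq α]
    (g : ι → α → ℝ) (hg : ∀ T : Finset α, T.Nonempty → unifOn T ∈ Set.range g) :
    2 ^ Fintype.card α - 1 ≤ Fintype.card ι := by
  calc 2 ^ Fintype.card α - 1 = ((Finset.univ.erase (∅ : Finset α)).image unifOn).card := by
        rw [Finset.card_image_of_injective _ unifOn_injective,
          Finset.card_erase_of_mem (Finset.mem_univ _), Finset.card_univ, Fintype.card_finset]
    _ ≤ (Finset.univ.image g).card := by
        refine Finset.card_le_card fun _ hμ => ?_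
        obtain ⟨T, hT, rfl⟩ := Finset.mem_image.mp hμ
        obtain ⟨i, hi⟩ := hg T (Finset.nonempty_iff_ne_empty.mpr (Finset.ne_of_mem_erase hT))
        exact Finset.mem_image.mpr ⟨i, Finset.mem_univ _, hi⟩
    _ ≤ Fintype.card ι := Finset.card_image_le

noncomputable def uniformStrategy (S A : Type) [Fintype A] : List (S × A) → S → A → ℝ :=
  fun _ _ _ => (Fintype.card A : ℝ)⁻¹

theorem isStrategy_uniformStrategy {S A : Type} [Fintype A] [Nonempty A] :
    IsStrategy (uniformStrategy S A) :=
  ⟨fun _ _ _ => by simp [uniformStrategy], fun _ _ => by simp [uniformStrategy]⟩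

namespace Blowup

variable {n : ℕ}

def sState (i : Fin n) : Fin (n + 2) := i.castSucc.castSucc
def sStar : Fin (n + 2) := (Fin.last n).castSucc
def tState : Fin (n + 2) := Fin.last (n + 1)
def aAct (i : Fin n) : Fin (n + 1) := i.castSucc
def bAct : Fin (n + 1) := Fin.last n

-- From `t`, `a_i` leads to `s_i` and `b` to `s*`; every `s_i` leads back to `t`; `s*` is absorbing.
def move : Fin (n + 2) → Fin (n + 1) → Fin (n + 2) :=
  Fin.lastCases (Fin.lastCases sStar sState) (Fin.lastCases (fun _ => sStar) fun _ _ => tState)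

@[simp] theorem move_tState_aAct (i : Fin n) : move tState (aAct i) = sState i := by
  simp [move, tState, aAct]

@[simp] theorem move_tState_bAct : move tState bAct = (sStar : Fin (n + 2)) := by
  simp [move, tState, bAct]

@[simp] theorem move_sState (i : Fin n) (a : Fin (n + 1)) : move (sState i) a = tState := by
  simp [move, sState]

@[simp] theorem move_sStar (a : Fin (n + 1)) : move sStar a = (sStar : Fin (n + 2)) := by
  simp [move, sStar]

variable (n) in
def game : Game (Fin (n + 2)) (Fin (n + 1)) where
  P1 := Fin.lastCases false fun _ => true
  delta s a s' := if s' = move s a then 1 else 0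
  delta_nonneg _ _ _ := by split_ifs <;> norm_num
  delta_sum _ _ := by simp

@[simp] theorem game_P1_tState : (game n).P1 tState = false := by simp [game, tState]
@[simp] theorem game_P1_sState (i : Fin n) : (game n).P1 (sState i) = true := by
  simp [game, sState]
@[simp] theorem game_P1_sStar : (game n).P1 sStar = true := by simp [game, sStar]

theorem game_delta_of_move_eq {s s' : Fin (n + 2)} {a : Fin (n + 1)} (h : move s a = s') :
    (game n).delta s a s' = 1 := by simp [game, h]

theorem isDirac_game_delta (s : Fin (n + 2)) (a : Fin (n + 1)) : IsDirac ((game n).delta s a) :=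
  ⟨move s a, fun _ => by simp [game]⟩

def machineAction (m : Fin n) (s : Fin (n + 2)) : Fin (n + 1) :=
  if s = sState m ∨ s = sStar then aAct m else bAct

variable (n) in
noncomputable def machine : Mealy n (Fin (n + 2)) (Fin (n + 1)) where
  init _ := (n : ℝ)⁻¹
  next m s a := if a = machineAction m s then 1 else 0
  up m _ _ m' := if m' = m then 1 else 0

theorem properMealy_machine (hn : 1 ≤ n) : ProperMealy (machine n) := by
  have hn' : (n : ℝ) ≠ 0 := by positivity
  refine ⟨fun _ => by simp [machine], by simp [machine, hn'], fun _ _ _ => ?_,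
    fun _ _ => by simp [machine], fun _ _ _ _ => ?_, fun _ _ _ => by simp [machine]⟩ <;>
  simp only [machine] <;> split_ifs <;> norm_num

theorem detNext_machine : DetNext (machine n) :=
  fun m s => ⟨machineAction m s, fun _ => by simp [machine]⟩

theorem detUp_machine : DetUp (machine n) :=
  fun m _ _ => ⟨m, fun _ => by simp [machine]⟩

theorem machine_init : (machine n).init = unifOn Finset.univ := by
  funext m
  simp [machine, unifOn]

theorem machine_next_sState_bAct (m i : Fin n) :
    (machine n).next m (sState i) bAct = if m = i then 0 else 1 := by
  by_cases h : m = i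
  · subst h
    simpa [machine, machineAction, aAct, bAct, sState, sStar] using (Fin.castSucc_lt_last m).ne'
  · simp [machine, machineAction, aAct, bAct, sState, sStar, h, Ne.symm h]

theorem machine_next_sStar_aAct (m j : Fin n) :
    (machine n).next m sStar (aAct j) = if m = j then 1 else 0 := by
  simp [machine, machineAction, aAct, eq_comm]

theorem sum_up_machine_mul (μ : Fin n → ℝ) (s : Fin (n + 2)) (a : Fin (n + 1)) (m : Fin n)
    (f : Fin n → ℝ) :
    ∑ m', μ m' * (machine n).up m' s a m * f m' = μ m * f m := by
  simp [machine]

theorem stepDist_machine_tState (μ : Fin n → ℝ) (a : Fin (n + 1)) :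
    stepDist (game n) (machine n) μ tState a = μ := by
  funext m
  simpa [stepDist] using sum_up_machine_mul μ tState a m 1

theorem unifOn_mul_next_sState (T : Finset (Fin n)) (i m : Fin n) :
    unifOn T m * (machine n).next m (sState i) bAct =
      if m ∈ T.erase i then (T.card : ℝ)⁻¹ else 0 := by
  rw [machine_next_sState_bAct, unifOn]
  split_ifs <;> simp_all

theorem sum_unifOn_mul_next_sState (T : Finset (Fin n)) (i : Fin n) :
    ∑ m, unifOn T m * (machine n).next m (sState i) bAct = (T.erase i).card / T.card := by
  simp only [unifOn_mul_next_sState]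
  rw [Finset.sum_ite_mem, Finset.univ_inter, Finset.sum_const, nsmul_eq_mul, div_eq_mul_inv]

theorem stepDist_machine_sState (T : Finset (Fin n)) (i : Fin n) (hT : (T.erase i).Nonempty) :
    stepDist (game n) (machine n) (unifOn T) (sState i) bAct = unifOn (T.erase i) := by
  have hT' : (T.card : ℝ) ≠ 0 := by simpa using hT.mono (T.erase_subset i) |>.ne_empty
  have hTi : ((T.erase i).card : ℝ) ≠ 0 := by simpa using hT.ne_empty
  have hsum := sum_unifOn_mul_next_sState T i
  funext m
  rw [stepDist, if_pos ⟨game_P1_sState i, by rw [hsum]; positivity⟩, sum_up_machine_mul,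
    unifOn_mul_next_sState, hsum, unifOn]
  split_ifs
  · field_simp
  · simp

theorem mealyStrat_machine_sStar {w : List (Fin (n + 2) × Fin (n + 1))} {T : Finset (Fin n)}
    (h : memDist (game n) (machine n) w = unifOn T) (j : Fin n) :
    mealyStrat (game n) (machine n) w sStar (aAct j) = unifOn T j := by
  simp [mealyStrat, h, machine_next_sStar_aAct]

def visitSteps (l : List (Fin n)) : List (Fin (n + 1) × Fin (n + 2)) :=
  l.flatMap fun i => [(aAct i, sState i), (bAct, tState)]

def visitWord (l : List (Fin n)) : List (Fin (n + 2) × Fin (n + 1)) :=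
  l.flatMap fun i => [(tState, aAct i), (sState i, bAct)]

theorem histWord_visitSteps (l : List (Fin n)) :
    histWord tState (visitSteps l) = (visitWord l, tState) := by
  induction l using List.reverseRecOn with
  | nil => rfl
  | append_singleton l i ih =>
    have hvisit : visitSteps (l ++ [i]) =
        visitSteps l ++ [(aAct i, sState i)] ++ [(bAct, tState)] := by
      simp [visitSteps]
    rw [hvisit, histWord_append_singleton, histWord_append_singleton, ih]
    simp [visitWord]

theorem compl_toFinset_append_singleton (l : List (Fin n)) (i : Fin n) :
    (l ++ [i]).toFinsetᶜ = l.toFinsetᶜ.erase i := by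
  ext
  simp

theorem memDist_machine_visitWord (l : List (Fin n)) (hl : l.toFinsetᶜ.Nonempty) :
    memDist (game n) (machine n) (visitWord l) = unifOn l.toFinsetᶜ := by
  induction l using List.reverseRecOn with
  | nil => simp [visitWord, memDist, machine_init]
  | append_singleton l i ih =>
    rw [compl_toFinset_append_singleton] at hl ⊢
    have hvisit : visitWord (l ++ [i]) =
        visitWord l ++ [(tState, aAct i)] ++ [(sState i, bAct)] := by
      simp [visitWord]
    rw [hvisit, memDist_append_singleton, memDist_append_singleton, stepDist_machine_tState,
      ih (hl.mono (Finset.erase_subset _ _)), stepDist_machine_sState _ _ hl]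

theorem histProb_machine_visitSteps_pos (l : List (Fin n)) (hl : l.toFinsetᶜ.Nonempty) :
    0 < histProb (game n) (mealyStrat (game n) (machine n)) (uniformStrategy _ _) tState
      (visitSteps l) := by
  induction l using List.reverseRecOn with
  | nil => simp [histProb, visitSteps]
  | append_singleton l i ih =>
    rw [compl_toFinset_append_singleton] at hl
    have hvisit : visitSteps (l ++ [i]) =
        visitSteps l ++ [(aAct i, sState i)] ++ [(bAct, tState)] := by
      simp [visitSteps]
    have hstrat : mealyStrat (game n) (machine n) (visitWord l ++ [(tState, aAct i)]) (sState i)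
        bAct = (l.toFinsetᶜ.erase i).card / l.toFinsetᶜ.card := by
      rw [mealyStrat, memDist_append_singleton, stepDist_machine_tState,
        memDist_machine_visitWord l (hl.mono (Finset.erase_subset _ _)),
        sum_unifOn_mul_next_sState]
    have hw : histWord tState (visitSteps l ++ [(aAct i, sState i)]) =
        (visitWord l ++ [(tState, aAct i)], sState i) := by
      rw [histWord_append_singleton, histWord_visitSteps]
    rw [hvisit, histProb_append_singleton (hw := hw),
      histProb_append_singleton (hw := histWord_visitSteps l), game_P1_tState, game_P1_sState,
      game_delta_of_move_eq (move_tState_aAct i), game_delta_of_move_eq (move_sState i bAct),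
      if_pos rfl, if_neg Bool.false_ne_true, hstrat]
    have hprefix := ih (hl.mono (Finset.erase_subset _ _))
    have hcard := (hl.mono (Finset.erase_subset _ _)).card_pos
    have hcard' := hl.card_pos
    simp only [uniformStrategy]
    positivity

theorem exists_next_sStar_eq_unifOn {k : ℕ} {B : Mealy k (Fin (n + 2)) (Fin (n + 1))}
    (hI : DetInit B) (hU : DetUp B)
    (hB : OutcomeEquiv (game n) (mealyStrat (game n) (machine n)) (mealyStrat (game n) B))
    {F : Finset (Fin n)} (hF : F.Nonempty) :
    unifOn F ∈ Set.range fun m j => B.next m sStar (aAct j) := by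
  set l := Fᶜ.toList
  have hl : l.toFinsetᶜ = F := by simp [l]
  have hw : histWord tState (visitSteps l ++ [(bAct, sStar)]) =
      (visitWord l ++ [(tState, bAct)], sStar) := by
    rw [histWord_append_singleton, histWord_visitSteps]
  have hmem : memDist (game n) (machine n) (visitWord l ++ [(tState, bAct)]) = unifOn F := by
    rw [memDist_append_singleton, stepDist_machine_tState,
      memDist_machine_visitWord l (hl ▸ hF), hl]
  have hpos : histProb (game n) (mealyStrat (game n) (machine n)) (uniformStrategy _ _) tState
      (visitSteps l ++ [(bAct, sStar)]) ≠ 0 := by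
    rw [histProb_append_singleton (hw := histWord_visitSteps l), game_P1_tState,
      game_delta_of_move_eq move_tState_bAct, if_neg Bool.false_ne_true]
    have hprefix := histProb_machine_visitSteps_pos l (hl ▸ hF)
    simp only [uniformStrategy]
    positivity
  obtain ⟨m, hm⟩ := exists_mealyStrat_eq_next (game n) hI hU (visitWord l ++ [(tState, bAct)])
  refine ⟨m, funext fun j => ?_⟩
  change B.next m sStar (aAct j) = _
  rw [← hm, ← hB.apply_eq_of_histProb_ne_zero isStrategy_uniformStrategy hw game_P1_sStar hpos
    (by rw [game_delta_of_move_eq (move_sStar (aAct j))]; exact one_ne_zero),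
    mealyStrat_machine_sStar hmem]

end Blowup

/-- For every `n ≥ 1` there are a deterministic two-player game with `n + 2`
states (and `n + 1` actions) and an RDD strategy of Player 1 with `n` memory
states such that every outcome-equivalent DRD strategy has at least `2^n - 1`
memory states. -/
theorem rdd_to_drd_exponential_blowup (n : ℕ) (hn : 1 ≤ n) :
    ∃ G : Game (Fin (n + 2)) (Fin (n + 1)),
      (∀ s a, IsDirac (G.delta s a)) ∧
      ∃ N : Mealy n (Fin (n + 2)) (Fin (n + 1)),
        ProperMealy N ∧ DetNext N ∧ DetUp N ∧
        ∀ (k : ℕ) (B : Mealy k (Fin (n + 2)) (Fin (n + 1))),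
          ProperMealy B → DetInit B → DetUp B →
          OutcomeEquiv G (mealyStrat G N) (mealyStrat G B) →
          2 ^ n - 1 ≤ k := by
  refine ⟨Blowup.game n, Blowup.isDirac_game_delta, Blowup.machine n,
    Blowup.properMealy_machine hn, Blowup.detNext_machine, Blowup.detUp_machine,
    fun k B _ hI hU hB => ?_⟩
  simpa using two_pow_card_sub_one_le_card _ fun F hF =>
    Blowup.exists_next_sStar_eq_unifOn hI hU hB hF
end

section
/- For every RRR strategy M = (M, μ_init, α_next, α_up) of Player i in a stochastic game, there exists an outcome-equivalent RDR strategy (randomised initialisation, deterministic outputs, randomised updates) B with at most |M|·(|S_i|·(|A|−1) + 1) memory states. -/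
open scoped Classical

variable {S A : Type} [Fintype S] [Fintype A]

/-!
Fix an enumeration of `A`. For a memory state `m`, cut `[0, 1)` at the cumulative probabilities
`Σ_{a' < a} α_next(m, s)(a')` of all Player-1 states `s`: at most `|S₁| (|A| - 1)` interior points,
so at most `L = |S₁| (|A| - 1) + 1` cells `[x_j, x_{j+1})`. Drawing `t` uniformly from `[0, 1)` and
playing at each `s` the action whose cumulative interval contains `t` realises `α_next(m, s)` at all
`s` simultaneously, and the pure strategy played depends only on the cell `j` of `t`. The RDR
machine remembers `(m, j)`, entering it with probability `(x_{j+1} - x_j)` times that of entering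
`m`. By induction on the history its belief is `μ_w(m) (x_{j+1} - x_j)`, so it plays like `M` at
every Player-1 state and all cylinders get the same probability.
-/

/-- The paper's `Σ_{a' < a} α_next(m, s)(a')`, for the order on `A` given by `Fintype.equivFin A`
and the action `a` at position `k`. -/
noncomputable def cumMass (r : A → ℝ) (k : ℕ) : ℝ :=
  ∑ b, if (Fintype.equivFin A b : ℕ) < k then r b else 0

lemma cumMass_zero (r : A → ℝ) : cumMass r 0 = 0 := by
  simp [cumMass]

lemma cumMass_card (r : A → ℝ) : cumMass r (Fintype.card A) = ∑ a, r a := by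
  simp [cumMass]

lemma cumMass_succ (r : A → ℝ) (a : A) :
    cumMass r (Fintype.equivFin A a + 1) = cumMass r (Fintype.equivFin A a) + r a := by
  have hsplit : ∀ b, (if (Fintype.equivFin A b : ℕ) < Fintype.equivFin A a + 1 then r b else 0)
      = (if (Fintype.equivFin A b : ℕ) < Fintype.equivFin A a then r b else 0)
        + if b = a then r b else 0 := by
    intro b
    rcases lt_trichotomy (Fintype.equivFin A b : ℕ) (Fintype.equivFin A a) with h | h | h
    · have hb : b ≠ a := by rintro rfl; omega
      simp [h, hb, Nat.lt_succ_of_lt h]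
    · have hb : b = a := by simpa [Fin.val_inj] using h
      simp [hb]
    · have hb : b ≠ a := by rintro rfl; omega
      simp [hb, h.not_gt, show ¬ (Fintype.equivFin A b : ℕ) < Fintype.equivFin A a + 1 by omega]
  simp only [cumMass, hsplit, Finset.sum_add_distrib, Finset.sum_ite_eq', Finset.mem_univ, if_true]

lemma cumMass_mono {r : A → ℝ} (hr : ∀ a, 0 ≤ r a) : Monotone (cumMass r) := by
  intro k k' hk
  refine Finset.sum_le_sum fun b _ => ?_
  split_ifs with h h' <;> first | exact le_rfl | exact hr b | omega

lemma cumMass_mem_Icc {r : A → ℝ} (hr0 : ∀ a, 0 ≤ r a) (hr1 : ∑ a, r a = 1)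
    (k : ℕ) : cumMass r k ∈ Set.Icc 0 1 := by
  refine ⟨cumMass_zero r ▸ cumMass_mono hr0 k.zero_le, ?_⟩
  rcases le_total k (Fintype.card A) with hk | hk
  · exact hr1 ▸ cumMass_card r ▸ cumMass_mono hr0 hk
  · have hall : ∀ b : A, (Fintype.equivFin A b : ℕ) < k := fun b => by omega
    simp [cumMass, hall, hr1]

def cumInterval (r : A → ℝ) (a : A) : Set ℝ :=
  Set.Ico (cumMass r (Fintype.equivFin A a)) (cumMass r (Fintype.equivFin A a + 1))

lemma exists_mem_cumInterval {r : A → ℝ} (hr1 : ∑ a, r a = 1) {t : ℝ} (ht : t ∈ Set.Ico 0 1) :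
    ∃ a, t ∈ cumInterval r a := by
  by_contra! hnone
  have hbelow : ∀ k ≤ Fintype.card A, cumMass r k ≤ t := by
    intro k hk
    induction k with
    | zero => simpa [cumMass_zero] using ht.1
    | succ k ih =>
      have hb := hnone ((Fintype.equivFin A).symm ⟨k, hk⟩)
      simp only [cumInterval, Equiv.apply_symm_apply, Set.mem_Ico, not_and, not_lt] at hb
      exact hb (ih (by omega))
  have htop := hbelow _ le_rfl
  rw [cumMass_card, hr1] at htop
  exact ht.2.not_ge htop

lemma eq_of_mem_cumInterval {r : A → ℝ} (hr0 : ∀ a, 0 ≤ r a) {t : ℝ} {a b : A}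
    (ha : t ∈ cumInterval r a) (hb : t ∈ cumInterval r b) : a = b := by
  have hdisjoint : ∀ {a b : A}, (Fintype.equivFin A a : ℕ) < Fintype.equivFin A b →
      t ∈ cumInterval r a → t ∉ cumInterval r b :=
    fun hab ha hb => (ha.2.trans_le (cumMass_mono hr0 (Nat.succ_le_of_lt hab))).not_ge hb.1
  by_contra hne
  rcases lt_or_gt_of_ne (Fin.val_injective.ne ((Fintype.equivFin A).injective.ne hne)) with h | h
  · exact hdisjoint h ha hb
  · exact hdisjoint h hb ha

noncomputable def pureChoice [Nonempty A] (r : A → ℝ) (t : ℝ) : A :=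
  Classical.epsilon fun a => t ∈ cumInterval r a

lemma pureChoice_eq_iff [Nonempty A] {r : A → ℝ} (hr0 : ∀ a, 0 ≤ r a) (hr1 : ∑ a, r a = 1)
    {t : ℝ} (ht : t ∈ Set.Ico 0 1) (a : A) : pureChoice r t = a ↔ t ∈ cumInterval r a :=
  have hspec := Classical.epsilon_spec (exists_mem_cumInterval hr1 ht)
  ⟨fun h => h ▸ hspec, eq_of_mem_cumInterval hr0 hspec⟩

lemma sum_range_ite_lt_sub {x : ℕ → ℝ} (hx : Monotone x) {i L : ℕ} (hi : i ≤ L) :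
    ∑ j ∈ Finset.range L, (if x j < x i then x (j + 1) - x j else 0) = x i - x 0 := by
  have hterm : ∀ j, (if x j < x i then x (j + 1) - x j else 0)
      = if j < i then x (j + 1) - x j else 0 := by
    intro j
    by_cases hj : j < i
    · have hflat : ¬ x j < x i → x (j + 1) - x j = 0 := fun h =>
        by linarith [hx (Nat.succ_le_of_lt hj), hx (Nat.le_succ j)]
      by_cases h : x j < x i <;> simp [h, hj, hflat]
    · simp [hj, (hx (not_lt.1 hj)).not_gt]
  have hrange : (Finset.range L).filter (· < i) = Finset.range i := by
    ext j; simp only [Finset.mem_filter, Finset.mem_range]; omega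
  rw [Finset.sum_congr rfl fun j _ => hterm j, ← Finset.sum_filter, hrange, Finset.sum_range_sub]

lemma sum_range_ite_mem_Ico {x : ℕ → ℝ} (hx : Monotone x) {i₁ i₂ L : ℕ}
    (h₁ : i₁ ≤ L) (h₂ : i₂ ≤ L) (h₁₂ : x i₁ ≤ x i₂) :
    ∑ j ∈ Finset.range L, (if x j ∈ Set.Ico (x i₁) (x i₂) then x (j + 1) - x j else 0)
      = x i₂ - x i₁ := by
  have hterm : ∀ j, (if x j ∈ Set.Ico (x i₁) (x i₂) then x (j + 1) - x j else 0)
      = (if x j < x i₂ then x (j + 1) - x j else 0)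
        - if x j < x i₁ then x (j + 1) - x j else 0 := by
    intro j
    by_cases hlt₂ : x j < x i₂ <;> by_cases hlt₁ : x j < x i₁
    · simp [Set.mem_Ico, hlt₁, hlt₂, not_le.2 hlt₁]
    · simp [Set.mem_Ico, hlt₁, hlt₂, not_lt.1 hlt₁]
    · exact absurd (hlt₁.trans_le h₁₂) hlt₂
    · simp [Set.mem_Ico, hlt₁, hlt₂]
  rw [Finset.sum_congr rfl fun j _ => hterm j, Finset.sum_sub_distrib,
    sum_range_ite_lt_sub hx h₂, sum_range_ite_lt_sub hx h₁]
  ring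

lemma Finset.exists_monotone_enum {α : Type*} [LinearOrder α] (C : Finset α) (hC : C.Nonempty)
    {L : ℕ} (hL : C.card ≤ L + 1) :
    ∃ x : ℕ → α, Monotone x ∧ (∀ j, x j ∈ C) ∧ ∀ c ∈ C, ∃ i ≤ L, x i = c := by
  have hpos : 0 < C.card := hC.card_pos
  set g := C.orderEmbOfFin rfl
  have hclamp : ∀ j, min j (C.card - 1) < C.card := fun j => by omega
  refine ⟨fun j => g ⟨min j (C.card - 1), hclamp j⟩, fun j j' h => g.monotone ?_,
    fun j => C.orderEmbOfFin_mem rfl _, fun c hc => ?_⟩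
  · simpa [Fin.le_def] using Or.inl h
  · obtain ⟨i, rfl⟩ : c ∈ Set.range g := by rwa [C.range_orderEmbOfFin rfl]
    refine ⟨i, by omega, ?_⟩
    simp [Nat.min_eq_left (Nat.le_sub_one_of_lt i.2)]

lemma sum_range_ite_pureChoice_eq [Nonempty A] {r : A → ℝ} (hr0 : ∀ a, 0 ≤ r a)
    (hr1 : ∑ a, r a = 1) {x : ℕ → ℝ} (hx : Monotone x) (hx01 : ∀ j, x j ∈ Set.Icc 0 1) {L : ℕ}
    (hcover : ∀ k ≤ Fintype.card A, ∃ i ≤ L, x i = cumMass r k) (a : A) :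
    ∑ j ∈ Finset.range L, (if pureChoice r (x j) = a then x (j + 1) - x j else 0) = r a := by
  have hidx := (Fintype.equivFin A a).2
  obtain ⟨i₁, hi₁, hx₁⟩ := hcover _ hidx.le
  obtain ⟨i₂, hi₂, hx₂⟩ := hcover (Fintype.equivFin A a + 1) hidx
  have hterm : ∀ j, (if pureChoice r (x j) = a then x (j + 1) - x j else 0)
      = if x j ∈ Set.Ico (x i₁) (x i₂) then x (j + 1) - x j else 0 := by
    intro j
    by_cases hj : x j < 1
    · simp only [pureChoice_eq_iff hr0 hr1 ⟨(hx01 j).1, hj⟩, cumInterval, hx₁, hx₂]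
    · have hflat : x (j + 1) - x j = 0 := by
        linarith [hx (Nat.le_succ j), (hx01 (j + 1)).2, not_lt.1 hj]
      simp [hflat]
  rw [Finset.sum_congr rfl fun j _ => hterm j,
    sum_range_ite_mem_Ico hx hi₁ hi₂ (hx₁ ▸ hx₂ ▸ cumMass_mono hr0 (Nat.le_succ _)),
    hx₁, hx₂, cumMass_succ]
  ring

theorem exists_mixture_of_pure [Nonempty A] {ι : Type*} (I : Finset ι)
    (q : ι → A → ℝ) (hq0 : ∀ i ∈ I, ∀ a, 0 ≤ q i a) (hq1 : ∀ i ∈ I, ∑ a, q i a = 1) :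
    ∃ (p : Fin (I.card * (Fintype.card A - 1) + 1) → ℝ)
      (f : Fin (I.card * (Fintype.card A - 1) + 1) → ι → A),
      (∀ j, 0 ≤ p j) ∧ ∑ j, p j = 1 ∧
      ∀ i ∈ I, ∀ a, ∑ j, (if f j i = a then p j else 0) = q i a := by
  set L := I.card * (Fintype.card A - 1) + 1
  set C : Finset ℝ := insert 0 (insert 1
    ((I ×ˢ Finset.Ico 1 (Fintype.card A)).image fun ik => cumMass (q ik.1) ik.2))
  have hC_card : C.card ≤ L + 1 := by
    calc C.card ≤ ((I ×ˢ Finset.Ico 1 (Fintype.card A)).image _).card + 1 + 1 :=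
          (Finset.card_insert_le _ _).trans (Nat.succ_le_succ (Finset.card_insert_le _ _))
      _ ≤ (I ×ˢ Finset.Ico 1 (Fintype.card A)).card + 1 + 1 := by gcongr; exact Finset.card_image_le
      _ = L + 1 := by rw [Finset.card_product, Nat.card_Ico]
  have hC_unit : ∀ c ∈ C, c ∈ Set.Icc (0 : ℝ) 1 := by
    simp only [C, Finset.mem_insert, Finset.mem_image, Finset.mem_product]
    rintro c (rfl | rfl | ⟨⟨i, k⟩, ⟨hi, -⟩, rfl⟩)
    · simp
    · simp
    · exact cumMass_mem_Icc (hq0 i hi) (hq1 i hi) k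
  have hC_cum : ∀ i ∈ I, ∀ k ≤ Fintype.card A, cumMass (q i) k ∈ C := by
    intro i hi k hk
    rcases Nat.eq_zero_or_pos k with rfl | hk0
    · simp [C, cumMass_zero]
    rcases hk.eq_or_lt with rfl | hkA
    · simp [C, cumMass_card, hq1 i hi]
    exact Finset.mem_insert_of_mem (Finset.mem_insert_of_mem (Finset.mem_image.2
      ⟨(i, k), Finset.mem_product.2 ⟨hi, Finset.mem_Ico.2 ⟨hk0, hkA⟩⟩, rfl⟩))
  obtain ⟨x, hx, hxC, hCx⟩ := C.exists_monotone_enum ⟨0, by simp [C]⟩ hC_card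
  have hx0 : x 0 = 0 := by
    obtain ⟨i, -, hi⟩ := hCx 0 (by simp [C])
    linarith [hx i.zero_le, (hC_unit _ (hxC 0)).1]
  have hxL : x L = 1 := by
    obtain ⟨i, hi, hi1⟩ := hCx 1 (by simp [C])
    linarith [hx hi, (hC_unit _ (hxC L)).2]
  refine ⟨fun j => x (j + 1) - x j, fun j i => pureChoice (q i) (x j),
    fun j => sub_nonneg.2 (hx (Nat.le_succ _)), ?_, fun i hi a => ?_⟩
  · rw [Fin.sum_univ_eq_sum_range (fun j => x (j + 1) - x j), Finset.sum_range_sub, hxL, hx0,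
      sub_zero]
  · rw [Fin.sum_univ_eq_sum_range
      (fun j => if pureChoice (q i) (x j) = a then x (j + 1) - x j else 0)]
    exact sum_range_ite_pureChoice_eq (hq0 i hi) (hq1 i hi) hx (fun j => hC_unit _ (hxC j))
      (fun k hk => hCx _ (hC_cum i hi k hk)) a

lemma outcomeEquiv_of_forall_P1_eq {G : Game S A} {σ τ : List (S × A) → S → A → ℝ}
    (h : ∀ w s a, G.P1 s = true → σ w s a = τ w s a) : OutcomeEquiv G σ τ := by
  intro σ₂ _ s₀ steps
  have hturn : ∀ w s a, (if G.P1 s = true then σ w s a else σ₂ w s a)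
      = if G.P1 s = true then τ w s a else σ₂ w s a := fun w s a => by
    split_ifs with hs
    · exact h w s a hs
    · rfl
  simp only [histProb, hturn]

section PureOutputs

variable {n L : ℕ}

lemma sum_fin_mul_eq_sum_sum {M : Type*} [AddCommMonoid M] (g : Fin (n * L) → M) :
    ∑ x, g x = ∑ m, ∑ j, g (finProdFinEquiv (m, j)) := by
  rw [← finProdFinEquiv.sum_comp, Fintype.sum_prod_type]

/-- The memory `x : Fin (n * L)` encodes the pair `(m, j) = finProdFinEquiv.symm x`, and
`liftDist μ p x` is the paper's `(x^m_{j+1} - x^m_j) · μ(m)` with `p m j = x^m_{j+1} - x^m_j`. -/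
noncomputable def liftDist (μ : Fin n → ℝ) (p : Fin n → Fin L → ℝ) (x : Fin (n * L)) : ℝ :=
  μ (finProdFinEquiv.symm x).1 * p (finProdFinEquiv.symm x).1 (finProdFinEquiv.symm x).2

lemma sum_liftDist {p : Fin n → Fin L → ℝ} (hp1 : ∀ m, ∑ j, p m j = 1) (μ : Fin n → ℝ) :
    ∑ x, liftDist μ p x = ∑ m, μ m := by
  simp only [sum_fin_mul_eq_sum_sum, liftDist, Equiv.symm_apply_apply, ← Finset.mul_sum, hp1,
    mul_one]

noncomputable def Mealy.withPureOutputs (N : Mealy n S A) (p : Fin n → Fin L → ℝ)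
    (f : Fin n → Fin L → S → A) : Mealy (n * L) S A where
  init := liftDist N.init p
  next x s a := if f (finProdFinEquiv.symm x).1 (finProdFinEquiv.symm x).2 s = a then 1 else 0
  up x s a := liftDist (N.up (finProdFinEquiv.symm x).1 s a) p

lemma ProperMealy.withPureOutputs {S A : Type} [Fintype A] {N : Mealy n S A} (hN : ProperMealy N)
    {p : Fin n → Fin L → ℝ} (hp0 : ∀ m j, 0 ≤ p m j) (hp1 : ∀ m, ∑ j, p m j = 1)
    (f : Fin n → Fin L → S → A) : ProperMealy (N.withPureOutputs p f) := by
  obtain ⟨hinit0, hinit1, -, -, hup0, hup1⟩ := hN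
  refine ⟨fun x => mul_nonneg (hinit0 _) (hp0 _ _), (sum_liftDist hp1 _).trans hinit1,
    fun x s a => ?_, fun x s => ?_, fun x s a y => mul_nonneg (hup0 _ _ _ _) (hp0 _ _),
    fun x s a => (sum_liftDist hp1 _).trans (hup1 _ _ _)⟩
  · simp only [Mealy.withPureOutputs]; split_ifs <;> norm_num
  · simp [Mealy.withPureOutputs]

lemma detNext_withPureOutputs {S A : Type} (N : Mealy n S A) (p : Fin n → Fin L → ℝ)
    (f : Fin n → Fin L → S → A) : DetNext (N.withPureOutputs p f) :=
  fun _ _ => ⟨_, fun _ => if_congr eq_comm rfl rfl⟩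

lemma sum_liftDist_mul_up {S A : Type} {N : Mealy n S A} {p : Fin n → Fin L → ℝ}
    (hp1 : ∀ m, ∑ j, p m j = 1) (f : Fin n → Fin L → S → A) (μ : Fin n → ℝ) (s : S) (a : A)
    (y : Fin (n * L)) :
    ∑ x, liftDist μ p x * (N.withPureOutputs p f).up x s a y
      = liftDist (fun m' => ∑ m, μ m * N.up m s a m') p y := by
  simp only [sum_fin_mul_eq_sum_sum, Mealy.withPureOutputs, liftDist, Equiv.symm_apply_apply,
    Finset.sum_mul]
  refine Finset.sum_congr rfl fun m _ => ?_
  rw [← Finset.sum_mul, ← Finset.mul_sum, hp1]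
  ring

def IsPureMixture (G : Game S A) (N : Mealy n S A) (p : Fin n → Fin L → ℝ)
    (f : Fin n → Fin L → S → A) : Prop :=
  ∀ m s, G.P1 s = true → ∀ a, ∑ j, (if f m j s = a then p m j else 0) = N.next m s a

variable {G : Game S A} {N : Mealy n S A} {p : Fin n → Fin L → ℝ} {f : Fin n → Fin L → S → A}

lemma sum_liftDist_mul_next (hpf : IsPureMixture G N p f) {s : S} (hs : G.P1 s = true) (a : A)
    (μ : Fin n → ℝ) :
    ∑ x, liftDist μ p x * (N.withPureOutputs p f).next x s a = ∑ m, μ m * N.next m s a := by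
  simp only [sum_fin_mul_eq_sum_sum, Mealy.withPureOutputs, liftDist, Equiv.symm_apply_apply]
  refine Finset.sum_congr rfl fun m _ => ?_
  rw [← hpf m s hs a, Finset.mul_sum]
  refine Finset.sum_congr rfl fun j _ => ?_
  split_ifs <;> ring

lemma sum_liftDist_mul_up_mul_next (hpf : IsPureMixture G N p f) {s : S} (hs : G.P1 s = true)
    (a : A) (μ : Fin n → ℝ) (y : Fin (n * L)) :
    ∑ x, liftDist μ p x * (N.withPureOutputs p f).up x s a y * (N.withPureOutputs p f).next x s a
      = liftDist (fun m' => ∑ m, μ m * N.up m s a m' * N.next m s a) p y := by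
  simp only [sum_fin_mul_eq_sum_sum, Mealy.withPureOutputs, liftDist, Equiv.symm_apply_apply,
    Finset.sum_mul]
  refine Finset.sum_congr rfl fun m _ => ?_
  rw [← hpf m s hs a, Finset.mul_sum, Finset.sum_mul]
  refine Finset.sum_congr rfl fun j _ => ?_
  split_ifs <;> ring

lemma stepDist_withPureOutputs (hp1 : ∀ m, ∑ j, p m j = 1) (hpf : IsPureMixture G N p f)
    (μ : Fin n → ℝ) (s : S) (a : A) :
    stepDist G (N.withPureOutputs p f) (liftDist μ p) s a = liftDist (stepDist G N μ s a) p := by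
  by_cases hs : G.P1 s = true
  · by_cases hzero : ∑ m, μ m * N.next m s a = 0
    · simp only [stepDist, hs, sum_liftDist_mul_next hpf hs, hzero, ne_eq, not_true_eq_false,
        and_false, if_false]
      exact funext (sum_liftDist_mul_up hp1 f μ s a)
    · simp only [stepDist, hs, sum_liftDist_mul_next hpf hs, hzero, ne_eq, not_false_eq_true,
        and_self, if_true]
      funext y
      rw [sum_liftDist_mul_up_mul_next hpf hs]
      simp only [liftDist]
      ring
  · simp only [stepDist, hs]
    exact funext (sum_liftDist_mul_up hp1 f μ s a)

lemma memDist_withPureOutputs (hp1 : ∀ m, ∑ j, p m j = 1) (hpf : IsPureMixture G N p f)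
    (w : List (S × A)) : memDist G (N.withPureOutputs p f) w = liftDist (memDist G N w) p := by
  suffices ∀ μ, w.foldl (fun ν x => stepDist G (N.withPureOutputs p f) ν x.1 x.2) (liftDist μ p)
      = liftDist (w.foldl (fun ν x => stepDist G N ν x.1 x.2) μ) p from this N.init
  induction w with
  | nil => exact fun _ => rfl
  | cons x w ih =>
    exact fun μ => by simp only [List.foldl_cons, stepDist_withPureOutputs hp1 hpf, ih]

lemma outcomeEquiv_withPureOutputs (hp1 : ∀ m, ∑ j, p m j = 1) (hpf : IsPureMixture G N p f) :
    OutcomeEquiv G (mealyStrat G N) (mealyStrat G (N.withPureOutputs p f)) :=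
  outcomeEquiv_of_forall_P1_eq fun w _ a hs => by
    rw [mealyStrat, mealyStrat, memDist_withPureOutputs hp1 hpf, sum_liftDist_mul_next hpf hs]

end PureOutputs

/-- Every RRR strategy admits an outcome-equivalent RDR strategy (randomised
initialisation, deterministic outputs, randomised updates) with at most
`|M| · (|S_1| · (|A| − 1) + 1)` memory states, where `S_1` is the set of states
owned by the player. -/
theorem rrr_eq_rdr (S A : Type) [Fintype S] [Fintype A]
    (G : Game S A) (n : ℕ) (N : Mealy n S A) (hN : ProperMealy N) :
    ∃ (k : ℕ) (B : Mealy k S A), ProperMealy B ∧ DetNext B ∧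
      OutcomeEquiv G (mealyStrat G N) (mealyStrat G B) ∧
      k ≤ n * ((Finset.univ.filter fun s => G.P1 s = true).card * (Fintype.card A - 1) + 1) := by
  have hnext0 := hN.2.2.1
  have hnext1 := hN.2.2.2.1
  rcases isEmpty_or_nonempty A with hA | hA
  · refine ⟨n, N, hN, fun m s => ?_, fun _ _ _ _ => rfl, Nat.le_mul_of_pos_right n (Nat.succ_pos _)⟩
    simpa using hnext1 m s
  choose p f hp0 hp1 hpf using fun m =>
    exists_mixture_of_pure (Finset.univ.filter fun s => G.P1 s = true) (N.next m)
      (fun s _ => hnext0 m s) (fun s _ => hnext1 m s)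
  exact ⟨_, N.withPureOutputs p f, hN.withPureOutputs hp0 hp1 f, detNext_withPureOutputs N p f,
    outcomeEquiv_withPureOutputs hp1 fun m s hs => hpf m s (by simpa using hs), le_rfl⟩
end
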